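/- arXiv:1601.04358 — 7 statements merged into one kernel-verified Lean document; each statement's English description precedes it below -/
import Mathlib

section
/- For n > 2 and x > 0, the function L(x) = G(x)·coth(x) − G'(x)/n is nonnegative, where G(x) = ∫₀ˣ sinh(s)^{n−1} ds. -/
/-!
Put `F(x) = sinh(x)^n / cosh(x)`. Then `F(0) = 0` and
`F' = n sinh^(n-1) - sinh^(n+1) / cosh^2 ≤ n sinh^(n-1)` on `[0, ∞)`, so `F ≤ n G` there.
Multiplying by `coth x / n` gives `G(x) coth(x) ≥ sinh(x)^(n-1) / n`.
-/

open Real Set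

lemma continuous_sinh_rpow {p : ℝ} (hp : 0 ≤ p) : Continuous fun s => sinh s ^ p :=
  continuous_sinh.rpow_const fun _ => Or.inr hp

lemma hasDerivAt_sinh_rpow_div_cosh {n : ℝ} (hn : 1 ≤ n) (s : ℝ) :
    HasDerivAt (fun t => sinh t ^ n / cosh t)
      (n * sinh s ^ (n - 1) - sinh s ^ n * sinh s / cosh s ^ 2) s := by
  refine (((hasDerivAt_sinh s).rpow_const (Or.inr hn)).fun_div (hasDerivAt_cosh s)
    (cosh_pos s).ne').congr_deriv ?_
  field_simp

lemma sinh_rpow_div_cosh_le_mul_integral {n x : ℝ} (hn : 1 ≤ n) (hx : 0 ≤ x) :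
    sinh x ^ n / cosh x ≤ n * ∫ s in (0 : ℝ)..x, sinh s ^ (n - 1) := by
  have hderiv_le : ∀ s ∈ Ioo 0 x,
      n * sinh s ^ (n - 1) - sinh s ^ n * sinh s / cosh s ^ 2 ≤ n * sinh s ^ (n - 1) := by
    intro s hs
    have : 0 ≤ sinh s := sinh_nonneg_iff.2 hs.1.le
    exact sub_le_self _ (by positivity)
  have hcont : Continuous fun t => sinh t ^ n / cosh t :=
    (continuous_sinh_rpow (by linarith)).div continuous_cosh fun t => (cosh_pos t).ne'
  rw [← intervalIntegral.integral_const_mul]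
  have hcompare := intervalIntegral.sub_le_integral_of_hasDeriv_right_of_le hx
    hcont.continuousOn (fun s _ => (hasDerivAt_sinh_rpow_div_cosh hn s).hasDerivWithinAt)
    (continuous_const.fun_mul (continuous_sinh_rpow (by linarith))).integrableOn_Icc hderiv_le
  simpa only [sinh_zero, cosh_zero, zero_rpow (by linarith : n ≠ 0), zero_div, sub_zero] using hcompare

theorem L_nonneg (n : ℝ) (hn : 2 < n) (x : ℝ) (hx : 0 < x) :
    0 ≤ (∫ s in (0:ℝ)..x, Real.sinh s ^ (n - 1)) * (Real.cosh x / Real.sinh x)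
        - Real.sinh x ^ (n - 1) / n := by
  have hsx : 0 < sinh x := sinh_pos_iff.2 hx
  have hkey := sinh_rpow_div_cosh_le_mul_integral (by linarith : (1 : ℝ) ≤ n) hx.le
  rw [sub_nonneg, rpow_sub_one hsx.ne', div_le_iff₀ (by linarith)]
  calc sinh x ^ n / sinh x = sinh x ^ n / cosh x * (cosh x / sinh x) := by
        field_simp [(cosh_pos x).ne']
    _ ≤ (n * ∫ s in (0 : ℝ)..x, sinh s ^ (n - 1)) * (cosh x / sinh x) := by
        gcongr
    _ = _ := by ring
end

section
/- For n > 2 and x ≥ 0, the function g(x) = (n−2)·cosh(x)·m(x) − σ·G(x)·sinh(x)² is nonnegative, where σ = (n−2)/(n+2), m(x) = G(x)·cosh(x) − sinh(x)^n/n, and G(x) = ∫₀ˣ sinh(s)^{n−1} ds. -/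
/-! With `σ (n + 2) = n - 2`, the identity `sinh x ^ n = n (G x cosh x - m x)` turns
`g' = (n - 2) (sinh x · m + cosh x · G sinh x) - σ (sinh x ^ (n + 1) + 2 G sinh x cosh x)` into
`g' = 2 (n - 2) (n + 1) / (n + 2) · sinh x · m x`. Since `m' = G sinh x ≥ 0` and `m 0 = 0`,
`m ≥ 0` on `[0, ∞)`; hence `g` is monotone there as well, and `g 0 = 0`. -/

open Real Set

theorem monotoneOn_Ici_of_hasDerivAt_nonneg {f f' : ℝ → ℝ} {a : ℝ}
    (hf : ∀ x, HasDerivAt f (f' x) x) (hf' : ∀ x, a < x → 0 ≤ f' x) :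
    MonotoneOn f (Ici a) :=
  monotoneOn_of_hasDerivWithinAt_nonneg (convex_Ici a)
    (fun x _ => (hf x).continuousAt.continuousWithinAt)
    (fun x _ => (hf x).hasDerivWithinAt)
    (fun x hx => hf' x (by rwa [interior_Ici] at hx))

theorem Real.rpow_sub_one_mul_self {x y : ℝ} (hy : y ≠ 0) : x ^ (y - 1) * x = x ^ y := by
  rcases eq_or_ne x 0 with rfl | hx
  · rw [mul_zero, zero_rpow hy]
  · rw [rpow_sub_one hx, div_mul_cancel₀ _ hx]

namespace SinhPowIntegral

noncomputable def G (n x : ℝ) : ℝ := ∫ s in (0:ℝ)..x, sinh s ^ (n - 1)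

noncomputable def m (n x : ℝ) : ℝ := G n x * cosh x - sinh x ^ n / n

noncomputable def g (n x : ℝ) : ℝ :=
  (n - 2) * cosh x * m n x - (n - 2) / (n + 2) * G n x * sinh x ^ 2

variable {n : ℝ}

theorem hasDerivAt_G (hn : 1 ≤ n) (x : ℝ) : HasDerivAt (G n) (sinh x ^ (n - 1)) x :=
  ((continuous_sinh.rpow_const fun _ => Or.inr (by linarith)).integral_hasStrictDerivAt
    0 x).hasDerivAt

theorem G_nonneg {x : ℝ} (hx : 0 ≤ x) : 0 ≤ G n x :=
  intervalIntegral.integral_nonneg hx fun _ hs => rpow_nonneg (sinh_nonneg_iff.2 hs.1) _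

theorem hasDerivAt_m (hn : 1 ≤ n) (x : ℝ) : HasDerivAt (m n) (G n x * sinh x) x := by
  have hpow := ((hasDerivAt_sinh x).rpow_const (p := n) (Or.inr hn)).div_const n
  refine (((hasDerivAt_G hn x).mul (hasDerivAt_cosh x)).sub hpow).congr_deriv ?_
  field_simp
  ring

theorem m_zero (hn : n ≠ 0) : m n 0 = 0 := by
  simp [m, G, zero_rpow hn]

theorem m_nonneg (hn : 1 ≤ n) {x : ℝ} (hx : 0 ≤ x) : 0 ≤ m n x := by
  have hmono : MonotoneOn (m n) (Ici 0) :=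
    monotoneOn_Ici_of_hasDerivAt_nonneg (hasDerivAt_m hn) fun t ht =>
      mul_nonneg (G_nonneg ht.le) (sinh_nonneg_iff.2 ht.le)
  simpa [m_zero (by linarith : n ≠ 0)] using hmono self_mem_Ici hx hx

theorem hasDerivAt_g (hn : 1 ≤ n) (x : ℝ) :
    HasDerivAt (g n) (2 * (n - 2) * (n + 1) / (n + 2) * (sinh x * m n x)) x := by
  have hsq : HasDerivAt (fun t => sinh t ^ 2) (2 * sinh x * cosh x) x := by
    exact ((hasDerivAt_sinh x).pow 2).congr_deriv (by ring)
  have hraw := (((hasDerivAt_cosh x).const_mul (n - 2)).mul (hasDerivAt_m hn x)).sub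
    (((hasDerivAt_G hn x).const_mul ((n - 2) / (n + 2))).mul hsq)
  refine hraw.congr_deriv ?_
  have hpow : sinh x ^ (n - 1) * sinh x ^ 2 = sinh x * (n * (G n x * cosh x - m n x)) := by
    rw [m, pow_two, ← mul_assoc, rpow_sub_one_mul_self (by linarith)]
    field_simp
    ring
  rw [mul_assoc _ (sinh x ^ (n - 1)), hpow]
  have : n + 2 ≠ 0 := by linarith
  field_simp
  ring

theorem g_zero (hn : n ≠ 0) : g n 0 = 0 := by
  simp [g, m_zero hn, G]

theorem zero_le_g (hn : 2 ≤ n) {x : ℝ} (hx : 0 ≤ x) : 0 ≤ g n x := by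
  have hcoef : 0 ≤ 2 * (n - 2) * (n + 1) / (n + 2) := div_nonneg (by nlinarith) (by linarith)
  have hmono : MonotoneOn (g n) (Ici 0) :=
    monotoneOn_Ici_of_hasDerivAt_nonneg (hasDerivAt_g (by linarith)) fun t ht =>
      mul_nonneg hcoef (mul_nonneg (sinh_nonneg_iff.2 ht.le) (m_nonneg (by linarith) ht.le))
  simpa [g_zero (by linarith : n ≠ 0)] using hmono self_mem_Ici hx hx

end SinhPowIntegral

theorem g_nonneg (n : ℝ) (hn : 2 < n) (x : ℝ) (hx : 0 ≤ x) :
    0 ≤ (n - 2) * Real.cosh x *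
          ((∫ s in (0:ℝ)..x, Real.sinh s ^ (n - 1)) * Real.cosh x - Real.sinh x ^ n / n)
        - (n - 2) / (n + 2) * (∫ s in (0:ℝ)..x, Real.sinh s ^ (n - 1)) * Real.sinh x ^ 2 :=
  SinhPowIntegral.zero_le_g hn.le hx
end

section
/- (Key Lemma) For n > 2 and x > 0, L(x) ≥ (n/(n+2))·G(x)²/G'(x), where G(x) = ∫₀ˣ sinh(s)^{n−1} ds and L(x) = G(x)·coth(x) − G'(x)/n. -/
/-!
Multiplying by `G' = sinh^(n-1)`, the claim becomes `F ≥ 0` for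
`F = G cosh sinh^(n-2) - (sinh^(n-1))² / n - n/(n+2) G²`. Differentiating three times closes
the argument: `F' = (n-2) sinh^(n-3) M`, `M' = 2(n+1)/(n+2) sinh N` and `N' = G sinh ≥ 0` for
explicit `M`, `N`, and all three functions vanish at `0`, so `N`, `M`, `F` are nonnegative on
`[0, ∞)` in turn.
-/

open Real Set

theorem nonneg_of_hasDerivAt_nonneg {f f' : ℝ → ℝ} (hf : ContinuousOn f (Ici 0))
    (hf' : ∀ t, 0 < t → HasDerivAt f (f' t) t) (hf'₀ : ∀ t, 0 < t → 0 ≤ f' t) (h₀ : 0 ≤ f 0)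
    {x : ℝ} (hx : 0 ≤ x) : 0 ≤ f x := by
  have hmono : MonotoneOn f (Ici 0) :=
    monotoneOn_of_hasDerivWithinAt_nonneg (convex_Ici 0) hf
      (by simpa using fun t ht => (hf' t ht).hasDerivWithinAt) (by simpa using hf'₀)
  exact h₀.trans (hmono self_mem_Ici hx hx)

theorem rpow_eq_rpow_mul_pow {x : ℝ} (hx : x ≠ 0) {p q : ℝ} (k : ℕ) (h : p = q + k) :
    x ^ p = x ^ q * x ^ k := by
  rw [h, rpow_add_natCast hx]

namespace SinhPow

noncomputable def G (n x : ℝ) : ℝ := ∫ s in (0:ℝ)..x, sinh s ^ (n - 1)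

noncomputable def N (n x : ℝ) : ℝ := G n x * cosh x - sinh x ^ n / n

noncomputable def M (n x : ℝ) : ℝ :=
  G n x * (1 + (n + 1) / (n + 2) * sinh x ^ 2) - sinh x ^ n * cosh x / n

noncomputable def F (n x : ℝ) : ℝ :=
  G n x * cosh x * sinh x ^ (n - 2) - (sinh x ^ (n - 1)) ^ 2 / n - n / (n + 2) * G n x ^ 2

theorem continuous_rpow {p : ℝ} (hp : 0 ≤ p) : Continuous fun t => sinh t ^ p :=
  continuous_sinh.rpow_const fun _ => Or.inr hp

theorem hasDerivAt_rpow (p : ℝ) {t : ℝ} (ht : 0 < t) :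
    HasDerivAt (fun u => sinh u ^ p) (p * sinh t ^ (p - 1) * cosh t) t := by
  convert (hasDerivAt_sinh t).rpow_const (p := p) (Or.inl (sinh_pos_iff.2 ht).ne') using 1
  ring

variable {n : ℝ}

theorem G_zero : G n 0 = 0 := intervalIntegral.integral_same

theorem hasDerivAt_G (hn : 1 ≤ n) (t : ℝ) : HasDerivAt (G n) (sinh t ^ (n - 1)) t := by
  have hc := continuous_rpow (p := n - 1) (by linarith)
  exact intervalIntegral.integral_hasDerivAt_right (hc.intervalIntegrable 0 t)
    (hc.stronglyMeasurableAtFilter _ _) hc.continuousAt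

theorem continuous_G (hn : 1 ≤ n) : Continuous (G n) :=
  continuous_iff_continuousAt.2 fun t => (hasDerivAt_G hn t).continuousAt

theorem G_nonneg {x : ℝ} (hx : 0 ≤ x) : 0 ≤ G n x :=
  intervalIntegral.integral_nonneg hx fun _ hs => rpow_nonneg (sinh_nonneg_iff.2 hs.1) _

theorem hasDerivAt_N (hn : 1 ≤ n) {t : ℝ} (ht : 0 < t) :
    HasDerivAt (N n) (G n t * sinh t) t := by
  refine (((hasDerivAt_G hn t).fun_mul (hasDerivAt_cosh t)).fun_sub
    ((hasDerivAt_rpow n ht).div_const n)).congr_deriv ?_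
  have : n ≠ 0 := by linarith
  field_simp
  ring

theorem hasDerivAt_M (hn : 1 ≤ n) {t : ℝ} (ht : 0 < t) :
    HasDerivAt (M n) (2 * (n + 1) / (n + 2) * sinh t * N n t) t := by
  have hsq : HasDerivAt (fun u => sinh u ^ 2) (2 * sinh t * cosh t) t := by
    simpa using (hasDerivAt_sinh t).fun_pow 2
  refine (((hasDerivAt_G hn t).fun_mul (((hasDerivAt_const t 1).fun_add
    (hsq.const_mul ((n + 1) / (n + 2)))))).fun_sub
      (((hasDerivAt_rpow n ht).fun_mul (hasDerivAt_cosh t)).div_const n)).congr_deriv ?_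
  have hs := (sinh_pos_iff.2 ht).ne'
  rw [N, rpow_eq_rpow_mul_pow hs (p := n) (q := n - 1) 1 (by push_cast; ring)]
  have : n + 2 ≠ 0 := by linarith
  field_simp
  linear_combination (-(n * (n + 2)) * sinh t ^ (n - 1)) * cosh_sq t

theorem hasDerivAt_F (hn : 2 ≤ n) {t : ℝ} (ht : 0 < t) :
    HasDerivAt (F n) ((n - 2) * sinh t ^ (n - 3) * M n t) t := by
  have hG := hasDerivAt_G (n := n) (by linarith) t
  refine ((((hG.fun_mul (hasDerivAt_cosh t)).fun_mul (hasDerivAt_rpow (n - 2) ht)).fun_sub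
    (((hasDerivAt_rpow (n - 1) ht).fun_pow 2).div_const n)).fun_sub
      ((hG.fun_pow 2).const_mul (n / (n + 2)))).congr_deriv ?_
  simp only [Nat.cast_ofNat, Nat.add_one_sub_one, pow_one]
  have hs := (sinh_pos_iff.2 ht).ne'
  rw [M, rpow_eq_rpow_mul_pow hs (p := n - 1) (q := n - 3) 2 (by push_cast; ring),
    rpow_eq_rpow_mul_pow hs (p := n - 2) (q := n - 3) 1 (by push_cast; ring),
    rpow_eq_rpow_mul_pow hs (p := n) (q := n - 3) 3 (by push_cast; ring),
    rpow_eq_rpow_mul_pow hs (p := n - 2 - 1) (q := n - 3) 0 (by push_cast; ring),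
    rpow_eq_rpow_mul_pow hs (p := n - 1 - 1) (q := n - 3) 1 (by push_cast; ring)]
  have : n + 2 ≠ 0 := by linarith
  field_simp
  linear_combination (n * (n + 2) * (n - 2) * G n t) * cosh_sq t

theorem N_nonneg (hn : 1 ≤ n) {x : ℝ} (hx : 0 ≤ x) : 0 ≤ N n x := by
  refine nonneg_of_hasDerivAt_nonneg ?_ (fun t ht => hasDerivAt_N hn ht)
    (fun t ht => mul_nonneg (G_nonneg ht.le) (sinh_nonneg_iff.2 ht.le)) ?_ hx
  · exact (((continuous_G hn).mul continuous_cosh).sub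
      ((continuous_rpow (by linarith)).div_const n)).continuousOn
  · simp [N, G_zero, zero_rpow (show n ≠ 0 by linarith)]

theorem M_nonneg (hn : 1 ≤ n) {x : ℝ} (hx : 0 ≤ x) : 0 ≤ M n x := by
  refine nonneg_of_hasDerivAt_nonneg ?_ (fun t ht => hasDerivAt_M hn ht) (fun t ht => ?_) ?_ hx
  · exact (((continuous_G hn).mul (by fun_prop)).sub
      (((continuous_rpow (by linarith)).mul continuous_cosh).div_const n)).continuousOn
  · have := N_nonneg hn ht.le
    have := sinh_nonneg_iff.2 ht.le
    have : 0 ≤ n + 1 := by linarith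
    positivity
  · simp [M, G_zero, zero_rpow (show n ≠ 0 by linarith)]

theorem F_nonneg (hn : 2 ≤ n) {x : ℝ} (hx : 0 ≤ x) : 0 ≤ F n x := by
  have hG := continuous_G (n := n) (by linarith)
  refine nonneg_of_hasDerivAt_nonneg ?_ (fun t ht => hasDerivAt_F hn ht) (fun t ht => ?_) ?_ hx
  · exact (((hG.mul continuous_cosh).mul (continuous_rpow (by linarith))).sub
      (((continuous_rpow (by linarith)).pow 2).div_const n)).sub
        (continuous_const.mul (hG.pow 2)) |>.continuousOn
  · have := M_nonneg (by linarith : 1 ≤ n) ht.le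
    have := rpow_nonneg (sinh_nonneg_iff.2 ht.le) (n - 3)
    have : 0 ≤ n - 2 := by linarith
    positivity
  · simp [F, G_zero, zero_rpow (show n - 1 ≠ 0 by linarith)]

theorem F_eq {x : ℝ} (hx : 0 < x) :
    F n x = (G n x * (cosh x / sinh x) - sinh x ^ (n - 1) / n) * sinh x ^ (n - 1)
      - n / (n + 2) * G n x ^ 2 := by
  have hs := (sinh_pos_iff.2 hx).ne'
  rw [F, rpow_eq_rpow_mul_pow hs (p := n - 1) (q := n - 2) 1 (by push_cast; ring)]
  field_simp

end SinhPow

theorem key_lemma (n : ℝ) (hn : 2 < n) (x : ℝ) (hx : 0 < x) :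
    (∫ s in (0:ℝ)..x, Real.sinh s ^ (n - 1)) * (Real.cosh x / Real.sinh x)
        - Real.sinh x ^ (n - 1) / n
      ≥ n / (n + 2) * (∫ s in (0:ℝ)..x, Real.sinh s ^ (n - 1)) ^ 2 / Real.sinh x ^ (n - 1) := by
  have hF := SinhPow.F_nonneg hn.le hx.le
  rw [SinhPow.F_eq hx] at hF
  rw [ge_iff_le, div_le_iff₀ (rpow_pos_of_pos (sinh_pos_iff.2 hx) _)]
  exact sub_nonneg.1 hF
end

section
/- (Hardy-type inequality) Let R > 0, n > 2, and let u : [0,R] → ℝ be continuously differentiable with u(R) = 0. Then ∫₀ᴿ u(x)²·G'(x) dx ≤ 4·∫₀ᴿ u'(x)²·G(x)²/G'(x) dx, where G(x) = ∫₀ˣ sinh(s)^{n−1} ds. -/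
/-! With `G x = ∫₀ˣ f`, integration by parts gives `∫ u² f = -∫ 2 u u' G`, the boundary
terms vanishing because `G 0 = 0` and `u R = 0`. Bounding `-2 u u' G ≤ u² f / 2 + 2 u'² G² / f`
pointwise and absorbing half of the left-hand side gives the constant 4. For a nondecreasing
weight such as `sinh^(n-1)` one has `G x ≤ x f x`, so the right-hand integrand is bounded. -/

open Real MeasureTheory Set intervalIntegral

lemma neg_two_mul_le_sq_mul_div_two_add (a b g : ℝ) {w : ℝ} (hw : 0 < w) :
    -(2 * a * b * g) ≤ a ^ 2 * w / 2 + 2 * (b ^ 2 * g ^ 2 / w) := by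
  have hsq : a ^ 2 * w / 2 + 2 * (b ^ 2 * g ^ 2 / w) + 2 * a * b * g
      = (a * w + 2 * b * g) ^ 2 / (2 * w) := by
    field_simp
    ring
  have : 0 ≤ (a * w + 2 * b * g) ^ 2 / (2 * w) := by positivity
  linarith

lemma integral_le_mul_of_monotoneOn {f : ℝ → ℝ} {x : ℝ} (hx : 0 ≤ x)
    (hf : MonotoneOn f (Icc 0 x)) (hfi : IntervalIntegrable f volume 0 x) :
    ∫ s in (0:ℝ)..x, f s ≤ x * f x :=
  calc ∫ s in (0:ℝ)..x, f s ≤ ∫ _ in (0:ℝ)..x, f x :=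
        integral_mono_on hx hfi intervalIntegrable_const
          fun _ hs => hf hs (right_mem_Icc.2 hx) hs.2
    _ = x * f x := by simp

lemma sq_integral_div_le_of_monotoneOn {f : ℝ → ℝ} {R x : ℝ} (hf : Continuous f)
    (hf_mono : MonotoneOn f (Icc 0 R)) (hf_pos : ∀ y ∈ Ioc 0 R, 0 < f y) (hx : x ∈ Ioc 0 R) :
    (∫ s in (0:ℝ)..x, f s) ^ 2 / f x ≤ R ^ 2 * f R := by
  have hfx := hf_pos x hx
  have hG_nonneg : 0 ≤ ∫ s in (0:ℝ)..x, f s := by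
    rw [integral_of_le hx.1.le]
    exact setIntegral_nonneg measurableSet_Ioc fun s hs => (hf_pos s ⟨hs.1, hs.2.trans hx.2⟩).le
  have hG_le : ∫ s in (0:ℝ)..x, f s ≤ x * f x :=
    integral_le_mul_of_monotoneOn hx.1.le (hf_mono.mono (Icc_subset_Icc_right hx.2))
      (hf.intervalIntegrable _ _)
  calc (∫ s in (0:ℝ)..x, f s) ^ 2 / f x ≤ (x * f x) ^ 2 / f x := by gcongr
    _ = x ^ 2 * f x := by field_simp
    _ ≤ R ^ 2 * f R := by
      gcongr
      · exact hx.1.le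
      · exact hx.2
      · exact hf_mono ⟨hx.1.le, hx.2⟩ (right_mem_Icc.2 (hx.1.le.trans hx.2)) hx.2

lemma intervalIntegrable_sq_mul_sq_integral_div {f g : ℝ → ℝ} {R : ℝ} (hR : 0 ≤ R)
    (hf : Continuous f) (hf_mono : MonotoneOn f (Icc 0 R)) (hf_pos : ∀ x ∈ Ioc 0 R, 0 < f x)
    (hg : ContinuousOn g (Icc 0 R)) :
    IntervalIntegrable (fun x => g x ^ 2 * (∫ s in (0:ℝ)..x, f s) ^ 2 / f x) volume 0 R := by
  have hg2 : IntervalIntegrable (fun x => g x ^ 2 * (R ^ 2 * f R)) volume 0 R :=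
    ((hg.pow 2).mul continuousOn_const).intervalIntegrable_of_Icc hR
  refine hg2.mono_fun' ?_ ?_ <;> rw [uIoc_of_le hR]
  · refine ContinuousOn.aestronglyMeasurable ?_ measurableSet_Ioc
    refine ((hg.mono Ioc_subset_Icc_self).pow 2).mul ?_ |>.div hf.continuousOn
      fun x hx => (hf_pos x hx).ne'
    exact ((continuous_primitive hf.intervalIntegrable 0).pow 2).continuousOn
  · filter_upwards [ae_restrict_mem measurableSet_Ioc] with x hx
    rw [norm_of_nonneg (by have := hf_pos x hx; positivity), mul_div_assoc]
    gcongr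
    exact sq_integral_div_le_of_monotoneOn hf hf_mono hf_pos hx

lemma integral_sq_mul_eq_neg_integral {f G u u' : ℝ → ℝ} {R : ℝ} (hR : 0 ≤ R)
    (hf : ContinuousOn f (Icc 0 R)) (hG : ∀ x ∈ Icc 0 R, HasDerivAt G (f x) x) (hG0 : G 0 = 0)
    (hu : ∀ x ∈ Icc 0 R, HasDerivAt u (u' x) x) (hu' : ContinuousOn u' (Icc 0 R))
    (huR : u R = 0) :
    ∫ x in (0:ℝ)..R, u x ^ 2 * f x = -∫ x in (0:ℝ)..R, 2 * u x * u' x * G x := by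
  have hu_cont : ContinuousOn u (Icc 0 R) := fun x hx => (hu x hx).continuousAt.continuousWithinAt
  have hu2 : ∀ x ∈ uIcc 0 R, HasDerivAt (fun y => u y ^ 2) (2 * u x * u' x) x := by
    intro x hx
    rw [uIcc_of_le hR] at hx
    simpa [mul_assoc] using (hu x hx).fun_pow 2
  rw [integral_mul_deriv_eq_deriv_mul hu2 (by rwa [uIcc_of_le hR])
    (((continuousOn_const.mul hu_cont).mul hu').intervalIntegrable_of_Icc hR)
    (hf.intervalIntegrable_of_Icc hR)]
  simp [huR, hG0]

theorem weighted_hardy_inequality {f u u' : ℝ → ℝ} {R : ℝ} (hR : 0 ≤ R)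
    (hf : Continuous f) (hf_pos : ∀ x ∈ Ioo 0 R, 0 < f x)
    (hu : ∀ x ∈ Icc 0 R, HasDerivAt u (u' x) x) (hu' : ContinuousOn u' (Icc 0 R))
    (huR : u R = 0)
    (hq : IntervalIntegrable
      (fun x => u' x ^ 2 * (∫ s in (0:ℝ)..x, f s) ^ 2 / f x) volume 0 R) :
    ∫ x in (0:ℝ)..R, u x ^ 2 * f x
      ≤ 4 * ∫ x in (0:ℝ)..R, u' x ^ 2 * (∫ s in (0:ℝ)..x, f s) ^ 2 / f x := by
  set G := fun x => ∫ s in (0:ℝ)..x, f s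
  have hG : ∀ x, HasDerivAt G (f x) x := fun x => (hf.integral_hasStrictDerivAt 0 x).hasDerivAt
  have hu_cont : ContinuousOn u (Icc 0 R) := fun x hx => (hu x hx).continuousAt.continuousWithinAt
  have hcross_int : IntervalIntegrable (fun x => 2 * u x * u' x * G x) volume 0 R :=
    (((continuousOn_const.mul hu_cont).mul hu').mul
      (continuous_primitive hf.intervalIntegrable 0).continuousOn).intervalIntegrable_of_Icc hR
  have hlhs_int : IntervalIntegrable (fun x => u x ^ 2 * f x) volume 0 R :=
    ((hu_cont.pow 2).mul hf.continuousOn).intervalIntegrable_of_Icc hR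
  have hparts := integral_sq_mul_eq_neg_integral hR hf.continuousOn (fun x _ => hG x)
    integral_same hu hu' huR
  have hbound : ∫ x in (0:ℝ)..R, -(2 * u x * u' x * G x)
      ≤ ∫ x in (0:ℝ)..R, (u x ^ 2 * f x / 2 + 2 * (u' x ^ 2 * G x ^ 2 / f x)) :=
    integral_mono_on_of_le_Ioo hR hcross_int.neg ((hlhs_int.div_const 2).add (hq.const_mul 2))
      fun x hx => neg_two_mul_le_sq_mul_div_two_add _ _ _ (hf_pos x hx)
  rw [intervalIntegral.integral_neg, integral_add (hlhs_int.div_const 2) (hq.const_mul 2),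
    intervalIntegral.integral_div, intervalIntegral.integral_const_mul] at hbound
  linarith

theorem hardy_type (n R : ℝ) (hn : 2 < n) (hR : 0 < R)
    (u u' : ℝ → ℝ)
    (hu : ∀ x ∈ Set.Icc (0:ℝ) R, HasDerivAt u (u' x) x)
    (hu' : ContinuousOn u' (Set.Icc (0:ℝ) R))
    (huR : u R = 0) :
    ∫ x in (0:ℝ)..R, u x ^ 2 * Real.sinh x ^ (n - 1)
      ≤ 4 * ∫ x in (0:ℝ)..R,
          u' x ^ 2 * (∫ s in (0:ℝ)..x, Real.sinh s ^ (n - 1)) ^ 2 / Real.sinh x ^ (n - 1) := by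
  have hexp : 0 ≤ n - 1 := by linarith
  have hf : Continuous fun x => sinh x ^ (n - 1) :=
    (continuous_rpow_const hexp).comp continuous_sinh
  have hf_pos : ∀ x : ℝ, 0 < x → 0 < sinh x ^ (n - 1) := fun x hx =>
    rpow_pos_of_pos (sinh_pos_iff.2 hx) _
  have hf_mono : MonotoneOn (fun x => sinh x ^ (n - 1)) (Icc 0 R) := fun x hx _ _ hxy =>
    rpow_le_rpow (sinh_nonneg_iff.2 hx.1) (sinh_le_sinh.2 hxy) hexp
  exact weighted_hardy_inequality hR.le hf (fun x hx => hf_pos x hx.1) hu hu' huR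
    (intervalIntegrable_sq_mul_sq_integral_div hR.le hf hf_mono (fun x hx => hf_pos x hx.1) hu')
end

section
/- (Second Pohozaev-type identity) Let n > 2, R > 0, p = (n+2)/(n−2), G(x) = ∫₀ˣ sinh(s)^{n−1} ds, and let u ∈ C²([0,R]) satisfy −u'' − (n−1)·coth(x)·u' = λu + |u|^{p−1}u on (0,R) with u'(0) = 0, u(R) = 0. Then u'(R)²·G(R)/2 + ∫₀ᴿ u'(x)²·((n−1)·G(x)·coth(x) − G'(x)/2) dx = (λ/2)·∫₀ᴿ u(x)²·G'(x) dx + (1/(p+1))·∫₀ᴿ |u(x)|^{p+1}·G'(x) dx. -/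
/-!
If `-u'' - c u' = g(u)`, `F' = g` and `G' = w`, then
`d/dx[(u'²/2 + F(u)) G] = (u'²/2 + F(u)) w - c u'² G`.
Integrating over `[a, b]` with `G(a) = 0`, `u(b) = 0`, `F(0) = 0` leaves only the boundary term
`u'(b)² G(b) / 2`. The theorem is the case `c = (n-1) coth`, `G = ∫₀ˣ sinh^{n-1}` and
`F(t) = λt²/2 + |t|^{p+1}/(p+1)`.
-/

open Real Set intervalIntegral
open MeasureTheory (volume)

theorem hasDerivAt_abs_rpow_add_one_div {p : ℝ} (hp : 0 < p) (t : ℝ) :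
    HasDerivAt (fun t ↦ |t| ^ (p + 1) / (p + 1)) (|t| ^ (p - 1) * t) t :=
  ((hasDerivAt_abs_rpow t (by linarith : 1 < p + 1)).div_const (p + 1)).congr_deriv
    (by rw [show p + 1 - 2 = p - 1 by ring]; field_simp)

section WeightedEnergy

variable {u u' u'' c g F G w : ℝ → ℝ} {a b : ℝ}

theorem hasDerivAt_energy_mul_weight {x : ℝ} (hu : HasDerivAt u (u' x) x)
    (hu' : HasDerivAt u' (u'' x) x) (hF : HasDerivAt F (g (u x)) (u x))
    (hG : HasDerivAt G (w x) x) :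
    HasDerivAt (fun y ↦ (u' y ^ 2 / 2 + F (u y)) * G y)
      ((u'' x * u' x + g (u x) * u' x) * G x + (u' x ^ 2 / 2 + F (u x)) * w x) x := by
  have hE : HasDerivAt (fun y ↦ u' y ^ 2 / 2 + F (u y)) (u'' x * u' x + g (u x) * u' x) x :=
    (((hu'.fun_pow 2).div_const 2).fun_add (hF.comp x hu)).congr_deriv (by push_cast; ring)
  exact hE.mul hG

theorem pohozaev_identity_of_weight (hab : a ≤ b)
    (hu : ∀ x ∈ Icc a b, HasDerivAt u (u' x) x)
    (hu' : ∀ x ∈ Icc a b, HasDerivAt u' (u'' x) x)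
    (hu'' : ContinuousOn u'' (Icc a b))
    (hF : ∀ t, HasDerivAt F (g t) t) (hg : Continuous g)
    (hG : ∀ x ∈ Icc a b, HasDerivAt G (w x) x) (hw : ContinuousOn w (Icc a b))
    (hode : ∀ x ∈ Ioo a b, -u'' x - c x * u' x = g (u x))
    (hGa : G a = 0) (hub : u b = 0) (hF0 : F 0 = 0) :
    u' b ^ 2 * G b / 2 + ∫ x in a..b, u' x ^ 2 * (c x * G x - w x / 2)
      = ∫ x in a..b, F (u x) * w x := by
  have hFc : Continuous F := continuous_iff_continuousAt.2 fun t ↦ (hF t).continuousAt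
  have huc : ContinuousOn u (Icc a b) := fun x hx ↦ (hu x hx).continuousAt.continuousWithinAt
  have hu'c : ContinuousOn u' (Icc a b) := fun x hx ↦ (hu' x hx).continuousAt.continuousWithinAt
  have hGc : ContinuousOn G (Icc a b) := fun x hx ↦ (hG x hx).continuousAt.continuousWithinAt
  set Φ : ℝ → ℝ := fun x ↦
    (u'' x * u' x + g (u x) * u' x) * G x + (u' x ^ 2 / 2 + F (u x)) * w x
  have hΦ : IntervalIntegrable Φ volume a b := by
    refine ContinuousOn.intervalIntegrable ?_
    rw [uIcc_of_le hab]
    exact (((hu''.mul hu'c).add ((hg.comp_continuousOn huc).mul hu'c)).mul hGc).add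
      ((((hu'c.pow 2).div_const 2).add (hFc.comp_continuousOn huc)).mul hw)
  have hFw : IntervalIntegrable (fun x ↦ F (u x) * w x) volume a b := by
    refine ContinuousOn.intervalIntegrable ?_
    rw [uIcc_of_le hab]
    exact (hFc.comp_continuousOn huc).mul hw
  have hFTC : ∫ x in a..b, Φ x = u' b ^ 2 * G b / 2 := by
    rw [integral_eq_sub_of_hasDerivAt (fun x hx ↦ hasDerivAt_energy_mul_weight
        (hu x (uIcc_of_le hab ▸ hx)) (hu' x (uIcc_of_le hab ▸ hx)) (hF _)
        (hG x (uIcc_of_le hab ▸ hx))) hΦ]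
    simp [hGa, hub, hF0]
    ring
  have hpointwise : EqOn (fun x ↦ u' x ^ 2 * (c x * G x - w x / 2))
      (fun x ↦ F (u x) * w x - Φ x) (Ioo a b) := fun x hx ↦ by
    linear_combination (-(u' x * G x)) * hode x hx
  rw [integral_congr_Ioo_of_le hab hpointwise, integral_sub hFw hΦ, hFTC]
  ring

end WeightedEnergy

theorem pohozaev_two_general (n R lam : ℝ) (hn : 2 < n) (hR : 0 < R)
    (p : ℝ) (hp : p = (n + 2) / (n - 2))
    (u u' u'' : ℝ → ℝ)
    (hu : ∀ x ∈ Set.Icc (0:ℝ) R, HasDerivAt u (u' x) x)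
    (hu' : ∀ x ∈ Set.Icc (0:ℝ) R, HasDerivAt u' (u'' x) x)
    (hu'' : ContinuousOn u'' (Set.Icc (0:ℝ) R))
    (hode : ∀ x ∈ Set.Ioo (0:ℝ) R,
      -u'' x - (n - 1) * (Real.cosh x / Real.sinh x) * u' x
        = lam * u x + |u x| ^ (p - 1) * u x)
    (huR : u R = 0) :
    u' R ^ 2 * (∫ s in (0:ℝ)..R, Real.sinh s ^ (n - 1)) / 2
      + ∫ x in (0:ℝ)..R, u' x ^ 2 *
          ((n - 1) * (∫ s in (0:ℝ)..x, Real.sinh s ^ (n - 1)) * (Real.cosh x / Real.sinh x)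
            - Real.sinh x ^ (n - 1) / 2)
      = lam / 2 * (∫ x in (0:ℝ)..R, u x ^ 2 * Real.sinh x ^ (n - 1))
        + 1 / (p + 1) * ∫ x in (0:ℝ)..R, |u x| ^ (p + 1) * Real.sinh x ^ (n - 1) := by
  have hp1 : 1 < p := by rw [hp, one_lt_div (by linarith)]; linarith
  have hw : Continuous fun s ↦ sinh s ^ (n - 1) :=
    (continuous_rpow_const (by linarith)).comp continuous_sinh
  have hF : ∀ t : ℝ, HasDerivAt (fun t ↦ lam * t ^ 2 / 2 + |t| ^ (p + 1) / (p + 1))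
      (lam * t + |t| ^ (p - 1) * t) t := fun t ↦
    (((hasDerivAt_pow 2 t).const_mul lam).div_const 2 |>.add
      (hasDerivAt_abs_rpow_add_one_div (by linarith) t)).congr_deriv (by push_cast; ring)
  have key := pohozaev_identity_of_weight (c := fun x ↦ (n - 1) * (cosh x / sinh x))
    (G := fun x ↦ ∫ s in (0:ℝ)..x, sinh s ^ (n - 1)) hR.le hu hu' hu'' hF
    (by fun_prop (disch := linarith)) (fun x _ ↦ (hw.integral_hasStrictDerivAt 0 x).hasDerivAt)
    hw.continuousOn hode integral_same huR (by simp [zero_rpow (by linarith : p + 1 ≠ 0)])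
  have huc : ContinuousOn u (uIcc 0 R) := fun x hx ↦
    (hu x (uIcc_of_le hR.le ▸ hx)).continuousAt.continuousWithinAt
  have hu2 : IntervalIntegrable (fun x ↦ u x ^ 2 * sinh x ^ (n - 1)) volume 0 R :=
    ((huc.pow 2).mul hw.continuousOn).intervalIntegrable
  have hup : IntervalIntegrable (fun x ↦ |u x| ^ (p + 1) * sinh x ^ (n - 1)) volume 0 R :=
    (((continuous_rpow_const (by linarith)).comp continuous_abs |>.comp_continuousOn huc).mul
      hw.continuousOn).intervalIntegrable
  have hsplit :
      ∫ x in (0:ℝ)..R, (lam * u x ^ 2 / 2 + |u x| ^ (p + 1) / (p + 1)) * sinh x ^ (n - 1) =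
        lam / 2 * (∫ x in (0:ℝ)..R, u x ^ 2 * sinh x ^ (n - 1))
          + 1 / (p + 1) * ∫ x in (0:ℝ)..R, |u x| ^ (p + 1) * sinh x ^ (n - 1) := by
    rw [← integral_const_mul, ← integral_const_mul,
      ← integral_add (hu2.const_mul _) (hup.const_mul _)]
    exact integral_congr fun x _ ↦ by ring
  rw [← hsplit, ← key]
  congr 1
  exact integral_congr fun x _ ↦ by ring

theorem pohozaev_two (n R lam : ℝ) (hn : 2 < n) (hR : 0 < R)
    (p : ℝ) (hp : p = (n + 2) / (n - 2))
    (u u' u'' : ℝ → ℝ)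
    (hu : ∀ x ∈ Set.Icc (0:ℝ) R, HasDerivAt u (u' x) x)
    (hu' : ∀ x ∈ Set.Icc (0:ℝ) R, HasDerivAt u' (u'' x) x)
    (hu'' : ContinuousOn u'' (Set.Icc (0:ℝ) R))
    (hode : ∀ x ∈ Set.Ioo (0:ℝ) R,
      -u'' x - (n - 1) * (Real.cosh x / Real.sinh x) * u' x
        = lam * u x + |u x| ^ (p - 1) * u x)
    (hu'0 : u' 0 = 0) (huR : u R = 0) :
    u' R ^ 2 * (∫ s in (0:ℝ)..R, Real.sinh s ^ (n - 1)) / 2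
      + ∫ x in (0:ℝ)..R, u' x ^ 2 *
          ((n - 1) * (∫ s in (0:ℝ)..x, Real.sinh s ^ (n - 1)) * (Real.cosh x / Real.sinh x)
            - Real.sinh x ^ (n - 1) / 2)
      = lam / 2 * (∫ x in (0:ℝ)..R, u x ^ 2 * Real.sinh x ^ (n - 1))
        + 1 / (p + 1) * ∫ x in (0:ℝ)..R, |u x| ^ (p + 1) * Real.sinh x ^ (n - 1) :=
  pohozaev_two_general n R lam hn hR p hp u u' u'' hu hu' hu'' hode huR
end

section
/- (Combined Pohozaev identity) Under the hypotheses of the two Pohozaev identities, with L(x) = (n−1)·G(x)·coth(x) − (1/2 + 1/(p+1))·G'(x), one has ∫₀ᴿ u'(x)²·L(x) dx + u'(R)²·G(R)/2 = (λ/n)·∫₀ᴿ u(x)²·sinh(x)^{n−1} dx. -/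
/-!
Write `S = sinh ^ (n - 1)` and `G x = ∫₀ˣ S`, so that the equation reads `(S u')' = -S f(u)`.
Multiplying by `u` gives the energy flux `(u' S u)' = (u'² - u f(u)) S`; multiplying by `G u'` gives
the Pohozaev flux `(G (u'²/2 + F(u)))' = (u'²/2 + F(u)) S - (n - 1) G coth · u'²`, with `F' = f`.
Integrating `θ` times the first plus the second over `[0, R]` gives an identity for every `θ`: the
boundary terms vanish at `0` because `u' S → 0` and `G(x) coth x → S(0) = 0`, and at `R` because
`u(R) = 0`. For `f(t) = λt + |t|^(p-1) t`, the choice `θ = 1/(p+1)` cancels the critical term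
`|u|^(p+1)` and leaves `λ (1/2 - 1/(p+1)) u² = (λ/n) u²`.
-/

open Real Set Filter Topology MeasureTheory intervalIntegral

lemma abs_rpow_mul_sq (t : ℝ) {q : ℝ} (hq : q + 2 ≠ 0) : |t| ^ q * t ^ 2 = |t| ^ (q + 2) := by
  rw [rpow_add' (abs_nonneg t) hq, rpow_two, sq_abs]

lemma hasDerivAt_sinh_rpow (a : ℝ) {x : ℝ} (hx : 0 < x) :
    HasDerivAt (fun y => sinh y ^ a) (a * (cosh x / sinh x) * sinh x ^ a) x := by
  have hs : sinh x ≠ 0 := (sinh_pos_iff.2 hx).ne'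
  convert ((hasDerivAt_sinh x).rpow_const (p := a) (Or.inl hs)) using 1
  rw [rpow_sub_one hs]
  field_simp

lemma tendsto_integral_mul_coth_nhdsNE {S : ℝ → ℝ} (hS : Continuous S) :
    Tendsto (fun x => (∫ s in (0:ℝ)..x, S s) * (cosh x / sinh x)) (𝓝[≠] 0) (𝓝 (S 0)) := by
  -- For `x ≠ 0` the function is `slope G 0 x * cosh x / slope sinh 0 x`, with `G x = ∫₀ˣ S`.
  have hG := hasDerivAt_iff_tendsto_slope.1 (hS.integral_hasStrictDerivAt 0 0).hasDerivAt
  have hsinh := hasDerivAt_iff_tendsto_slope.1 (hasDerivAt_sinh 0)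
  have hcosh : Tendsto cosh (𝓝[≠] 0) (𝓝 1) := by
    simpa using continuous_cosh.continuousAt.tendsto.mono_left (nhdsWithin_le_nhds (a := 0))
  have h := (hG.mul hcosh).div hsinh (by simp)
  rw [cosh_zero, mul_one, div_one] at h
  refine h.congr' (eventually_nhdsWithin_of_forall fun x hx => ?_)
  have hx : x ≠ 0 := hx
  simp only [Pi.div_apply, slope_def_field, integral_same, sinh_zero, sub_zero]
  field_simp

lemma continuous_integral_mul_coth {S : ℝ → ℝ} (hS : Continuous S) (hS0 : S 0 = 0) :
    Continuous fun x => (∫ s in (0:ℝ)..x, S s) * (cosh x / sinh x) := by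
  refine continuous_iff_continuousAt.2 fun x => ?_
  rcases eq_or_ne x 0 with rfl | hx
  -- The value at `0` is `0 * (1 / 0) = 0 = S 0`, so only the punctured limit is needed.
  · rw [← continuousWithinAt_compl_self, ContinuousWithinAt]
    simpa [hS0] using tendsto_integral_mul_coth_nhdsNE hS
  · exact (hS.integral_hasStrictDerivAt 0 x).hasDerivAt.continuousAt.mul
      (continuous_cosh.continuousAt.div continuous_sinh.continuousAt (sinh_ne_zero.2 hx))

noncomputable def sinhPowIntegral (n x : ℝ) : ℝ := ∫ s in (0:ℝ)..x, sinh s ^ (n - 1)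

lemma continuous_sinh_rpow_s11 {a : ℝ} (ha : 0 ≤ a) : Continuous fun x => sinh x ^ a :=
  (continuous_rpow_const ha).comp continuous_sinh

lemma hasDerivAt_sinhPowIntegral {n : ℝ} (hn : 1 ≤ n) (x : ℝ) :
    HasDerivAt (sinhPowIntegral n) (sinh x ^ (n - 1)) x :=
  ((continuous_sinh_rpow_s11 (sub_nonneg.2 hn)).integral_hasStrictDerivAt 0 x).hasDerivAt

lemma continuous_sinhPowIntegral_mul_coth {n : ℝ} (hn : 1 < n) :
    Continuous fun x => sinhPowIntegral n x * (cosh x / sinh x) :=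
  continuous_integral_mul_coth (continuous_sinh_rpow_s11 (sub_nonneg.2 hn.le))
    (by simp [zero_rpow (sub_ne_zero.2 hn.ne')])

lemma continuous_pohozaevWeight {n : ℝ} (hn : 1 < n) (c : ℝ) :
    Continuous fun x => (n - 1) * sinhPowIntegral n x * (cosh x / sinh x)
      - c * sinh x ^ (n - 1) := by
  simp only [mul_assoc]
  exact (continuous_const.mul (continuous_sinhPowIntegral_mul_coth hn)).sub
    (continuous_const.mul (continuous_sinh_rpow_s11 (sub_nonneg.2 hn.le)))

section Pohozaev

variable {n R x : ℝ} {f F u u' u'' : ℝ → ℝ}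

lemma hasDerivAt_energyFlux (hx : 0 < x) (hu : HasDerivAt u (u' x) x)
    (hu' : HasDerivAt u' (u'' x) x)
    (hode : -u'' x - (n - 1) * (cosh x / sinh x) * u' x = f (u x)) :
    HasDerivAt (fun y => u' y * sinh y ^ (n - 1) * u y)
      ((u' x ^ 2 - u x * f (u x)) * sinh x ^ (n - 1)) x :=
  ((hu'.mul (hasDerivAt_sinh_rpow (n - 1) hx)).mul hu).congr_deriv
    (by simp only [Pi.mul_apply]; linear_combination (-(sinh x ^ (n - 1) * u x)) * hode)

lemma hasDerivAt_pohozaevFlux (hn : 1 ≤ n) (hF : HasDerivAt F (f (u x)) (u x))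
    (hu : HasDerivAt u (u' x) x) (hu' : HasDerivAt u' (u'' x) x)
    (hode : -u'' x - (n - 1) * (cosh x / sinh x) * u' x = f (u x)) :
    HasDerivAt (fun y => sinhPowIntegral n y * (u' y ^ 2 / 2 + F (u y)))
      ((u' x ^ 2 / 2 + F (u x)) * sinh x ^ (n - 1)
        - (n - 1) * sinhPowIntegral n x * (cosh x / sinh x) * u' x ^ 2) x :=
  ((hasDerivAt_sinhPowIntegral hn x).mul (((hu'.pow 2).div_const 2).add (hF.comp x hu))).congr_deriv
    (by
      simp only [Pi.add_apply, Pi.pow_apply, Function.comp_apply]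
      linear_combination (-(sinhPowIntegral n x * u' x)) * hode)

lemma continuousAt_pohozaevFlux (hn : 1 ≤ n) (hF : Continuous F) (hu : ContinuousAt u x)
    (hu' : ContinuousAt u' x) :
    ContinuousAt (fun y => sinhPowIntegral n y * (u' y ^ 2 / 2 + F (u y))) x :=
  (hasDerivAt_sinhPowIntegral hn x).continuousAt.mul (((hu'.pow 2).div_const 2).add
    (hF.continuousAt.comp hu))

lemma tendsto_energyFlux_zero (hu : ContinuousAt u 0)
    (hlim : Tendsto (fun x => u' x * sinh x ^ (n - 1)) (𝓝[>] 0) (𝓝 0)) :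
    Tendsto (fun y => u' y * sinh y ^ (n - 1) * u y) (𝓝[>] 0) (𝓝 0) := by
  simpa using hlim.mul (hu.tendsto.mono_left nhdsWithin_le_nhds)

theorem integral_pohozaev_combination (θ : ℝ) (hn : 1 < n) (hR : 0 < R) (hf : Continuous f)
    (hF : ∀ t, HasDerivAt F (f t) t) (hF0 : F 0 = 0)
    (hu : ∀ x ∈ Icc 0 R, HasDerivAt u (u' x) x)
    (hu' : ∀ x ∈ Icc 0 R, HasDerivAt u' (u'' x) x)
    (hode : ∀ x ∈ Ioo 0 R, -u'' x - (n - 1) * (cosh x / sinh x) * u' x = f (u x))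
    (huR : u R = 0)
    (hlim : Tendsto (fun x => u' x * sinh x ^ (n - 1)) (𝓝[>] 0) (𝓝 0)) :
    (∫ x in 0..R, u' x ^ 2 * ((n - 1) * sinhPowIntegral n x * (cosh x / sinh x)
        - (1 / 2 + θ) * sinh x ^ (n - 1)))
      + u' R ^ 2 * sinhPowIntegral n R / 2
      = ∫ x in 0..R, (F (u x) - θ * (u x * f (u x))) * sinh x ^ (n - 1) := by
  set Φ := fun y => θ * (u' y * sinh y ^ (n - 1) * u y)
    + sinhPowIntegral n y * (u' y ^ 2 / 2 + F (u y))
  have hS := continuous_sinh_rpow_s11 (sub_nonneg.2 hn.le)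
  have hFc : Continuous F := continuous_iff_continuousAt.2 fun t => (hF t).continuousAt
  have huc : ContinuousOn u (Icc 0 R) := fun x hx => (hu x hx).continuousAt.continuousWithinAt
  have hu'c : ContinuousOn u' (Icc 0 R) := fun x hx => (hu' x hx).continuousAt.continuousWithinAt
  have hL : IntervalIntegrable (fun x => u' x ^ 2 * ((n - 1) * sinhPowIntegral n x
      * (cosh x / sinh x) - (1 / 2 + θ) * sinh x ^ (n - 1))) volume 0 R :=
    ((hu'c.pow 2).mul (continuous_pohozaevWeight hn _).continuousOn).intervalIntegrable_of_Icc hR.le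
  have hN : IntervalIntegrable (fun x => (F (u x) - θ * (u x * f (u x))) * sinh x ^ (n - 1))
      volume 0 R :=
    (((hFc.comp_continuousOn huc).sub (continuousOn_const.mul (huc.mul
      (hf.comp_continuousOn huc)))).mul hS.continuousOn).intervalIntegrable_of_Icc hR.le
  have hΦ : ∀ x ∈ Ioo 0 R, HasDerivAt Φ ((F (u x) - θ * (u x * f (u x))) * sinh x ^ (n - 1)
      - u' x ^ 2 * ((n - 1) * sinhPowIntegral n x * (cosh x / sinh x)
        - (1 / 2 + θ) * sinh x ^ (n - 1))) x := fun x hx =>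
    have hxI := Ioo_subset_Icc_self hx
    (((hasDerivAt_energyFlux hx.1 (hu x hxI) (hu' x hxI) (hode x hx)).const_mul θ).add
      (hasDerivAt_pohozaevFlux hn.le (hF _) (hu x hxI) (hu' x hxI) (hode x hx))).congr_deriv
      (by ring)
  have hPc : ∀ x ∈ Icc 0 R,
      ContinuousAt (fun y => sinhPowIntegral n y * (u' y ^ 2 / 2 + F (u y))) x :=
    fun x hx => continuousAt_pohozaevFlux hn.le hFc (hu x hx).continuousAt (hu' x hx).continuousAt
  have h0 : (0:ℝ) ∈ Icc 0 R := ⟨le_rfl, hR.le⟩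
  have hRI : R ∈ Icc 0 R := ⟨hR.le, le_rfl⟩
  have hΦ0 : Tendsto Φ (𝓝[>] 0) (𝓝 0) := by
    convert ((tendsto_energyFlux_zero (hu 0 h0).continuousAt hlim).const_mul θ).add
      ((hPc 0 h0).tendsto.mono_left nhdsWithin_le_nhds) using 2
    simp [sinhPowIntegral]
  have hΦR : Tendsto Φ (𝓝[<] R) (𝓝 (u' R ^ 2 * sinhPowIntegral n R / 2)) := by
    have h : ContinuousAt Φ R := ((((hu' R hRI).continuousAt.mul hS.continuousAt).mul
      (hu R hRI).continuousAt).const_mul θ).add (hPc R hRI)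
    convert h.tendsto.mono_left nhdsWithin_le_nhds using 2
    simp only [Φ, huR, hF0]
    ring
  have hFTC := integral_eq_sub_of_hasDerivAt_of_tendsto hR hΦ (hN.sub hL) hΦ0 hΦR
  rw [integral_sub hN hL] at hFTC
  linarith

end Pohozaev

theorem pohozaev_combined_general (n R lam : ℝ) (hn : 2 < n) (hR : 0 < R)
    (p : ℝ) (hp : p = (n + 2) / (n - 2))
    (u u' u'' : ℝ → ℝ)
    (hu : ∀ x ∈ Set.Icc (0:ℝ) R, HasDerivAt u (u' x) x)
    (hu' : ∀ x ∈ Set.Icc (0:ℝ) R, HasDerivAt u' (u'' x) x)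
    (hode : ∀ x ∈ Set.Ioo (0:ℝ) R,
      -u'' x - (n - 1) * (Real.cosh x / Real.sinh x) * u' x
        = lam * u x + |u x| ^ (p - 1) * u x)
    (huR : u R = 0)
    (hlim : Filter.Tendsto (fun x => u' x * Real.sinh x ^ (n - 1))
      (nhdsWithin 0 (Set.Ioi 0)) (nhds 0)) :
    (∫ x in (0:ℝ)..R, u' x ^ 2 *
        ((n - 1) * (∫ s in (0:ℝ)..x, Real.sinh s ^ (n - 1)) * (Real.cosh x / Real.sinh x)
          - (1 / 2 + 1 / (p + 1)) * Real.sinh x ^ (n - 1)))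
      + u' R ^ 2 * (∫ s in (0:ℝ)..R, Real.sinh s ^ (n - 1)) / 2
      = lam / n * ∫ x in (0:ℝ)..R, u x ^ 2 * Real.sinh x ^ (n - 1) := by
  have hn0 : n ≠ 0 := by linarith
  have hn2 : n - 2 ≠ 0 := by linarith
  have hp1 : 1 < p := by rw [hp, lt_div_iff₀ (by linarith)]; linarith
  have hpn : 1 / 2 - 1 / (p + 1) = 1 / n := by
    rw [hp, div_add_one hn2, show n + 2 + (n - 2) = 2 * n by ring]
    field_simp
    ring
  have hf : Continuous fun t : ℝ => lam * t + |t| ^ (p - 1) * t := by fun_prop (disch := linarith)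
  have hF (t : ℝ) : HasDerivAt (fun t => lam * t ^ 2 / 2 + |t| ^ (p + 1) / (p + 1))
      (lam * t + |t| ^ (p - 1) * t) t :=
    ((((hasDerivAt_pow 2 t).const_mul lam).div_const 2).add
      ((hasDerivAt_abs_rpow t (by linarith)).div_const (p + 1))).congr_deriv
      (by rw [show p + 1 - 2 = p - 1 by ring]; field_simp; ring)
  have h := integral_pohozaev_combination (1 / (p + 1)) (by linarith) hR hf hF
    (by simp [zero_rpow (by linarith : p + 1 ≠ 0)]) hu hu' hode huR hlim
  unfold sinhPowIntegral at h
  rw [h, ← intervalIntegral.integral_const_mul]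
  refine integral_congr fun x _ => ?_
  have hsq := abs_rpow_mul_sq (u x) (q := p - 1) (by linarith)
  rw [show p - 1 + 2 = p + 1 by ring] at hsq
  linear_combination (lam * u x ^ 2 * sinh x ^ (n - 1)) * hpn
    - (1 / (p + 1) * sinh x ^ (n - 1)) * hsq

theorem pohozaev_combined (n R lam : ℝ) (hn : 2 < n) (hR : 0 < R)
    (p : ℝ) (hp : p = (n + 2) / (n - 2))
    (u u' u'' : ℝ → ℝ)
    (hu : ∀ x ∈ Set.Icc (0:ℝ) R, HasDerivAt u (u' x) x)
    (hu' : ∀ x ∈ Set.Icc (0:ℝ) R, HasDerivAt u' (u'' x) x)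
    (hu'' : ContinuousOn u'' (Set.Icc (0:ℝ) R))
    (hode : ∀ x ∈ Set.Ioo (0:ℝ) R,
      -u'' x - (n - 1) * (Real.cosh x / Real.sinh x) * u' x
        = lam * u x + |u x| ^ (p - 1) * u x)
    (hu'0 : u' 0 = 0) (huR : u R = 0)
    (hlim : Filter.Tendsto (fun x => u' x * Real.sinh x ^ (n - 1))
      (nhdsWithin 0 (Set.Ioi 0)) (nhds 0)) :
    (∫ x in (0:ℝ)..R, u' x ^ 2 *
        ((n - 1) * (∫ s in (0:ℝ)..x, Real.sinh s ^ (n - 1)) * (Real.cosh x / Real.sinh x)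
          - (1 / 2 + 1 / (p + 1)) * Real.sinh x ^ (n - 1)))
      + u' R ^ 2 * (∫ s in (0:ℝ)..R, Real.sinh s ^ (n - 1)) / 2
      = lam / n * ∫ x in (0:ℝ)..R, u x ^ 2 * Real.sinh x ^ (n - 1) :=
  pohozaev_combined_general n R lam hn hR p hp u u' u'' hu hu' hode huR hlim
end

section
/- (Main Theorem) Let 2 < n < 4, R > 0, p = (n+2)/(n−2), and λ ≤ n²(n−1)/(4(n+2)). Then the boundary value problem −u''(x) − (n−1)·coth(x)·u'(x) = λ·u(x) + |u(x)|^{p−1}·u(x) on (0,R), with u'(0) = 0 and u(R) = 0, has no nontrivial regular solution. -/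
/-!
With `ρ = sinh ^ (n - 1)` the equation reads `(ρ u')' = -ρ (λ u + |u| ^ (p - 1) u)`. Combine the
energy `u'² / 2 + F(u)` with the terms `u u'` and `u²` using weights `A = ρ tanh`, `B = A' / (p + 1)`
and a correction `C` depending on a free parameter `κ`. For the critical `p` the nonlinearity drops
out of the derivative of the resulting functional `P`, and completing a square gives
`P' = ρ (Q(1 / cosh²) u² - (n - 1) / n (tanh · u' + n / (n - 1) κ u)²)` with `Q` quadratic. For
`κ = (5n - 8) / 8` and `λ` below the threshold, `Q < 0` on `(0, 1]`, so `P' ≤ 0` with equality only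
where `u = 0`. As `P(0) = 0 ≤ P(R)`, `P` is constant on `[0, R]`, which forces `u ≡ 0`.
-/

open Real Set

noncomputable section

theorem eq_zero_of_hasDerivAt_nonpos_of_le {f f' : ℝ → ℝ} {a b : ℝ}
    (hf : ContinuousOn f (Icc a b)) (hderiv : ∀ x ∈ Ioo a b, HasDerivAt f (f' x) x)
    (hnonpos : ∀ x ∈ Ioo a b, f' x ≤ 0) (hab : f a ≤ f b) :
    ∀ x ∈ Ioo a b, f' x = 0 := by
  intro x hx
  have hanti : AntitoneOn f (Icc a b) :=
    antitoneOn_of_hasDerivWithinAt_nonpos (convex_Icc a b) hf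
      (fun y hy => (hderiv y (by simpa using hy)).hasDerivWithinAt) (by simpa using hnonpos)
  have hle : a ≤ b := (hx.1.trans hx.2).le
  have hconst : ∀ y ∈ Icc a b, f y = f a := fun y hy =>
    le_antisymm (hanti ⟨le_rfl, hle⟩ hy hy.1) (hab.trans (hanti hy ⟨hle, le_rfl⟩ hy.2))
  exact (hderiv x hx).unique <| (hasDerivAt_const x (f a)).congr_of_eventuallyEq <|
    Filter.eventually_of_mem (Icc_mem_nhds hx.1 hx.2) hconst

section WeightedEnergy

variable {A B C u u' : ℝ → ℝ} {A' B' C' u'' d lam p x : ℝ}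

def weightedEnergy (A B C : ℝ → ℝ) (lam p : ℝ) (u u' : ℝ → ℝ) (t : ℝ) : ℝ :=
  A t * (u' t ^ 2 / 2 + lam * u t ^ 2 / 2 + |u t| ^ (p + 1) / (p + 1))
    + B t * (u t * u' t) + C t * u t ^ 2 / 2

theorem hasDerivAt_weightedEnergy (hp : 0 < p) (hA : HasDerivAt A A' x)
    (hB : HasDerivAt B B' x) (hC : HasDerivAt C C' x) (hu : HasDerivAt u (u' x) x)
    (hu' : HasDerivAt u' u'' x) (hode : -u'' - d * u' x = lam * u x + |u x| ^ (p - 1) * u x)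
    (hAB : A' = (p + 1) * B x) :
    HasDerivAt (weightedEnergy A B C lam p u u')
      ((A' / 2 - d * A x + B x) * u' x ^ 2 + (B' - d * B x + C x) * (u x * u' x)
        + (lam * (A' / 2 - B x) + C' / 2) * u x ^ 2) x := by
  have habs : HasDerivAt (fun t => |u t| ^ (p + 1)) ((p + 1) * |u x| ^ (p - 1) * u x * u' x) x := by
    have h := (hasDerivAt_abs_rpow (u x) (by linarith : 1 < p + 1)).comp x hu
    rwa [show p + 1 - 2 = p - 1 by ring] at h
  have hsplit : |u x| ^ (p + 1) = |u x| ^ (p - 1) * u x ^ 2 := by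
    rw [show p + 1 = p - 1 + 2 by ring, rpow_add' (abs_nonneg _) (by linarith), rpow_two, sq_abs]
  have hp1 : p + 1 ≠ 0 := by linarith
  refine ((hA.mul ((((hu'.pow 2).div_const 2).add (((hu.pow 2).const_mul lam).div_const 2)).add
    (habs.div_const (p + 1)))).add (hB.mul (hu.mul hu'))).add
    ((hC.mul (hu.pow 2)).div_const 2) |>.congr_deriv ?_
  simp only [Pi.add_apply, Pi.mul_apply, Pi.pow_apply]
  rw [show u'' = -d * u' x - lam * u x - |u x| ^ (p - 1) * u x by linarith, hsplit, hAB]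
  field_simp
  ring

end WeightedEnergy

namespace Real

theorem hasDerivAt_tanh (x : ℝ) : HasDerivAt tanh (1 - tanh x ^ 2) x := by
  have h : HasDerivAt (fun t => sinh t / cosh t) _ x :=
    (hasDerivAt_sinh x).div (hasDerivAt_cosh x) (cosh_pos x).ne'
  simp only [← tanh_eq_sinh_div_cosh] at h
  refine h.congr_deriv ?_
  rw [tanh_eq_sinh_div_cosh]
  field_simp

@[fun_prop]
theorem continuous_tanh : Continuous tanh :=
  continuous_iff_continuousAt.2 fun x => (hasDerivAt_tanh x).continuousAt

theorem tanh_pos {x : ℝ} (hx : 0 < x) : 0 < tanh x := by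
  rw [tanh_eq_sinh_div_cosh]
  exact div_pos (sinh_pos_iff.2 hx) (cosh_pos x)

theorem hasDerivAt_sinh_rpow (a : ℝ) {x : ℝ} (hx : x ≠ 0) :
    HasDerivAt (fun t => sinh t ^ a) (a * sinh x ^ a / tanh x) x := by
  have hs : sinh x ≠ 0 := sinh_ne_zero.2 hx
  refine ((hasDerivAt_sinh x).rpow_const (p := a) (Or.inl hs)).congr_deriv ?_
  rw [rpow_sub_one hs, tanh_eq_sinh_div_cosh]
  field_simp

end Real

section Pohozaev

variable {n lam p κ x u'' : ℝ} {u u' : ℝ → ℝ}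

-- `B = A' / (p + 1)` for the critical `p`, and `C` makes the coefficient of `u u'` in `P'` equal
-- to `-2 κ A`.
def pohozaevA (n t : ℝ) : ℝ := sinh t ^ (n - 1) * tanh t

def pohozaevB (n t : ℝ) : ℝ := (n - 2) / (2 * n) * (sinh t ^ (n - 1) * (n - tanh t ^ 2))

def pohozaevC (n κ t : ℝ) : ℝ :=
  sinh t ^ (n - 1) * tanh t * ((n - 2) / n * (1 - tanh t ^ 2) - 2 * κ)

def pohozaevFunctional (n lam p κ : ℝ) : (ℝ → ℝ) → (ℝ → ℝ) → ℝ → ℝ :=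
  weightedEnergy (pohozaevA n) (pohozaevB n) (pohozaevC n κ) lam p

/-- Evaluated at `y = 1 / cosh² t = 1 - tanh² t`. -/
def pohozaevQuadratic (n lam κ y : ℝ) : ℝ :=
  n / (n - 1) * κ ^ 2 - κ * (n - 1 + y) + lam * (n - 1 + y) / n
    + (n - 2) / (2 * n) * ((n - 3) * y + 3 * y ^ 2)

def pohozaevDissipation (n lam κ : ℝ) (u u' : ℝ → ℝ) (t : ℝ) : ℝ :=
  sinh t ^ (n - 1) * (pohozaevQuadratic n lam κ (1 - tanh t ^ 2) * u t ^ 2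
    - (n - 1) / n * (tanh t * u' t + n / (n - 1) * κ * u t) ^ 2)

theorem hasDerivAt_pohozaevFunctional (hn : 2 < n) (hp : p = (n + 2) / (n - 2)) (hx : 0 < x)
    (hu : HasDerivAt u (u' x) x) (hu' : HasDerivAt u' u'' x)
    (hode : -u'' - (n - 1) * (cosh x / sinh x) * u' x = lam * u x + |u x| ^ (p - 1) * u x) :
    HasDerivAt (pohozaevFunctional n lam p κ u u') (pohozaevDissipation n lam κ u u' x) x := by
  have hτ : tanh x ≠ 0 := (tanh_pos hx).ne'
  have hn2 : n - 2 ≠ 0 := by linarith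
  have hn1 : n - 1 ≠ 0 := by linarith
  have hn0 : n ≠ 0 := by linarith
  have hρ := hasDerivAt_sinh_rpow (n - 1) hx.ne'
  have hτ' := hasDerivAt_tanh x
  have hA : HasDerivAt (pohozaevA n) _ x := hρ.mul hτ'
  have hB : HasDerivAt (pohozaevB n) _ x := (hρ.mul ((hτ'.pow 2).const_sub n)).const_mul _
  have hC : HasDerivAt (pohozaevC n κ) _ x :=
    (hρ.mul hτ').mul ((((hτ'.pow 2).const_sub 1).const_mul _).sub_const _)
  have hcoth : cosh x / sinh x = (tanh x)⁻¹ := by rw [tanh_eq_sinh_div_cosh, inv_div]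
  refine (hasDerivAt_weightedEnergy (by rw [hp]; exact div_pos (by linarith) (by linarith))
    hA hB hC hu hu' hode ?_).congr_deriv ?_
  · simp only [pohozaevB, hp]
    field_simp
    ring
  · simp only [pohozaevA, pohozaevB, pohozaevC, pohozaevDissipation, pohozaevQuadratic, hcoth,
      Pi.pow_apply, Pi.mul_apply]
    field_simp
    ring

theorem continuousOn_pohozaevFunctional {s : Set ℝ} (hn : 1 ≤ n) (hp : 0 ≤ p + 1)
    (hu : ContinuousOn u s) (hu' : ContinuousOn u' s) :
    ContinuousOn (pohozaevFunctional n lam p κ u u') s := by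
  have hρ : Continuous fun t => sinh t ^ (n - 1) :=
    continuous_sinh.rpow_const fun _ => Or.inr (by linarith)
  unfold pohozaevFunctional weightedEnergy pohozaevA pohozaevB pohozaevC
  fun_prop

theorem pohozaevFunctional_zero (hn : 1 < n) : pohozaevFunctional n lam p κ u u' 0 = 0 := by
  simp [pohozaevFunctional, weightedEnergy, pohozaevA, pohozaevB, pohozaevC,
    zero_rpow (sub_ne_zero.2 hn.ne')]

theorem pohozaevFunctional_nonneg_of_eq_zero {t : ℝ} (ht : 0 ≤ t) (hp : p + 1 ≠ 0)
    (hu : u t = 0) : 0 ≤ pohozaevFunctional n lam p κ u u' t := by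
  have hA : 0 ≤ pohozaevA n t :=
    mul_nonneg (rpow_nonneg (sinh_nonneg_iff.2 ht) _)
      (by rw [tanh_eq_sinh_div_cosh]; exact div_nonneg (sinh_nonneg_iff.2 ht) (cosh_pos t).le)
  have hP : pohozaevFunctional n lam p κ u u' t = pohozaevA n t * (u' t ^ 2 / 2) := by
    simp [pohozaevFunctional, weightedEnergy, hu, zero_rpow hp]
  rw [hP]
  exact mul_nonneg hA (by positivity)

theorem pohozaevDissipation_le {t : ℝ} (hn : 1 ≤ n) (ht : 0 ≤ t) :
    pohozaevDissipation n lam κ u u' t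
      ≤ sinh t ^ (n - 1) * pohozaevQuadratic n lam κ (1 - tanh t ^ 2) * u t ^ 2 := by
  have hρ : 0 ≤ sinh t ^ (n - 1) := rpow_nonneg (sinh_nonneg_iff.2 ht) _
  have hsq : 0 ≤ (n - 1) / n * (tanh t * u' t + n / (n - 1) * κ * u t) ^ 2 :=
    mul_nonneg (div_nonneg (by linarith) (by linarith)) (sq_nonneg _)
  have := mul_le_mul_of_nonneg_left
    (sub_le_self (pohozaevQuadratic n lam κ (1 - tanh t ^ 2) * u t ^ 2) hsq) hρ
  rw [pohozaevDissipation]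
  linarith

theorem pohozaevQuadratic_neg {y : ℝ} (hn : 2 < n) (h0 : pohozaevQuadratic n lam κ 0 ≤ 0)
    (h1 : pohozaevQuadratic n lam κ 1 < 0) (hy : y ∈ Ioc 0 1) :
    pohozaevQuadratic n lam κ y < 0 := by
  have hinterp : pohozaevQuadratic n lam κ y = (1 - y) * pohozaevQuadratic n lam κ 0
      + y * pohozaevQuadratic n lam κ 1 - 3 * (n - 2) / (2 * n) * (y * (1 - y)) := by
    simp only [pohozaevQuadratic]
    ring
  have hc : 0 ≤ 3 * (n - 2) / (2 * n) * (y * (1 - y)) :=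
    mul_nonneg (div_nonneg (by linarith) (by linarith)) (mul_nonneg hy.1.le (by linarith [hy.2]))
  rw [hinterp]
  nlinarith [mul_nonpos_of_nonneg_of_nonpos (by linarith [hy.2] : 0 ≤ 1 - y) h0,
    mul_neg_of_pos_of_neg hy.1 h1]

theorem pohozaevQuadratic_zero_nonpos (hn2 : 2 < n) (hn4 : n < 4)
    (hlam : lam ≤ n ^ 2 * (n - 1) / (4 * (n + 2))) :
    pohozaevQuadratic n lam ((5 * n - 8) / 8) 0 ≤ 0 := by
  have hn1 : n - 1 ≠ 0 := by linarith
  have hn2' : n + 2 ≠ 0 := by linarith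
  have h : pohozaevQuadratic n lam ((5 * n - 8) / 8) 0
      = (n - 2) * (n - 4) ^ 3 / (64 * (n - 1) * (n + 2))
        + (lam - n ^ 2 * (n - 1) / (4 * (n + 2))) * (n - 1) / n := by
    simp only [pohozaevQuadratic]
    field_simp
    ring
  have hcube : (n - 4) ^ 3 < 0 := Odd.pow_neg (by decide) (by linarith)
  rw [h]
  refine add_nonpos (div_nonpos_of_nonpos_of_nonneg ?_ ?_) (div_nonpos_of_nonpos_of_nonneg ?_ ?_)
  · exact mul_nonpos_of_nonneg_of_nonpos (by linarith) hcube.le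
  · nlinarith
  · exact mul_nonpos_of_nonpos_of_nonneg (by linarith) (by linarith)
  · linarith

theorem pohozaevQuadratic_one_neg (hn2 : 2 < n) (hn4 : n < 4)
    (hlam : lam ≤ n ^ 2 * (n - 1) / (4 * (n + 2))) :
    pohozaevQuadratic n lam ((5 * n - 8) / 8) 1 < 0 := by
  have hn1 : n - 1 ≠ 0 := by linarith
  have hn2' : n + 2 ≠ 0 := by linarith
  have h : pohozaevQuadratic n lam ((5 * n - 8) / 8) 1
      = (n - 4) * (n ^ 3 - 2 * n ^ 2 + 24 * n - 32) / (64 * (n - 1) * (n + 2))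
        + (lam - n ^ 2 * (n - 1) / (4 * (n + 2))) := by
    simp only [pohozaevQuadratic]
    field_simp
    ring
  have hcubic : 0 < n ^ 3 - 2 * n ^ 2 + 24 * n - 32 := by nlinarith
  rw [h]
  refine add_neg_of_neg_of_nonpos (div_neg_of_neg_of_pos ?_ (by nlinarith)) (by linarith)
  exact mul_neg_of_neg_of_pos (by linarith) hcubic

theorem sinh_rpow_mul_pohozaevQuadratic_neg (hn2 : 2 < n) (hn4 : n < 4)
    (hlam : lam ≤ n ^ 2 * (n - 1) / (4 * (n + 2))) (hx : 0 < x) :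
    sinh x ^ (n - 1) * pohozaevQuadratic n lam ((5 * n - 8) / 8) (1 - tanh x ^ 2) < 0 :=
  mul_neg_of_pos_of_neg (rpow_pos_of_pos (sinh_pos_iff.2 hx) _)
    (pohozaevQuadratic_neg hn2 (pohozaevQuadratic_zero_nonpos hn2 hn4 hlam)
      (pohozaevQuadratic_one_neg hn2 hn4 hlam)
      ⟨by linarith [tanh_sq_lt_one x], by linarith [sq_nonneg (tanh x)]⟩)

end Pohozaev

end

theorem main_theorem_general (n R lam : ℝ) (hn2 : 2 < n) (hn4 : n < 4) (hR : 0 < R)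
    (p : ℝ) (hp : p = (n + 2) / (n - 2))
    (hlam : lam ≤ n ^ 2 * (n - 1) / (4 * (n + 2)))
    (u u' u'' : ℝ → ℝ)
    (hu : ∀ x ∈ Set.Icc (0:ℝ) R, HasDerivAt u (u' x) x)
    (hu' : ∀ x ∈ Set.Icc (0:ℝ) R, HasDerivAt u' (u'' x) x)
    (hode : ∀ x ∈ Set.Ioo (0:ℝ) R,
      -u'' x - (n - 1) * (Real.cosh x / Real.sinh x) * u' x
        = lam * u x + |u x| ^ (p - 1) * u x)
    (huR : u R = 0)
    (hnontriv : ∃ x ∈ Set.Icc (0:ℝ) R, u x ≠ 0) :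
    False := by
  set κ := (5 * n - 8) / 8
  have hp1 : 0 < p + 1 := by
    rw [hp]; linarith [div_pos (by linarith : 0 < n + 2) (by linarith : 0 < n - 2)]
  have hcu : ContinuousOn u (Icc 0 R) := fun x hx => (hu x hx).continuousAt.continuousWithinAt
  have hcu' : ContinuousOn u' (Icc 0 R) := fun x hx => (hu' x hx).continuousAt.continuousWithinAt
  have hcoeff : ∀ x ∈ Ioo 0 R, sinh x ^ (n - 1) * pohozaevQuadratic n lam κ (1 - tanh x ^ 2) < 0 :=
    fun x hx => sinh_rpow_mul_pohozaevQuadratic_neg hn2 hn4 hlam hx.1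
  have hdiss : ∀ x ∈ Ioo 0 R, pohozaevDissipation n lam κ u u' x
      ≤ sinh x ^ (n - 1) * pohozaevQuadratic n lam κ (1 - tanh x ^ 2) * u x ^ 2 :=
    fun x hx => pohozaevDissipation_le (by linarith) hx.1.le
  have hzero := eq_zero_of_hasDerivAt_nonpos_of_le
    (continuousOn_pohozaevFunctional (lam := lam) (κ := κ) (by linarith) hp1.le hcu hcu')
    (fun x hx => hasDerivAt_pohozaevFunctional hn2 hp hx.1 (hu x (Ioo_subset_Icc_self hx))
      (hu' x (Ioo_subset_Icc_self hx)) (hode x hx))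
    (fun x hx => (hdiss x hx).trans (mul_nonpos_of_nonpos_of_nonneg (hcoeff x hx).le (sq_nonneg _)))
    (by rw [pohozaevFunctional_zero (by linarith)]
        exact pohozaevFunctional_nonneg_of_eq_zero hR.le hp1.ne' huR)
  have hu0 : EqOn u 0 (Ioo 0 R) := fun x hx => by
    have := hdiss x hx
    rw [hzero x hx] at this
    exact pow_eq_zero_iff (n := 2) (by norm_num) |>.1 <|
      le_antisymm (nonpos_of_mul_nonneg_right this (hcoeff x hx)) (sq_nonneg _)
  obtain ⟨x, hx, hux⟩ := hnontriv
  exact hux (hu0.of_subset_closure hcu continuousOn_const Ioo_subset_Icc_self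
    (closure_Ioo hR.ne).symm.subset hx)

theorem main_theorem (n R lam : ℝ) (hn2 : 2 < n) (hn4 : n < 4) (hR : 0 < R)
    (p : ℝ) (hp : p = (n + 2) / (n - 2))
    (hlam : lam ≤ n ^ 2 * (n - 1) / (4 * (n + 2)))
    (u u' u'' : ℝ → ℝ)
    (hu : ∀ x ∈ Set.Icc (0:ℝ) R, HasDerivAt u (u' x) x)
    (hu' : ∀ x ∈ Set.Icc (0:ℝ) R, HasDerivAt u' (u'' x) x)
    (hu'' : ContinuousOn u'' (Set.Icc (0:ℝ) R))
    (hode : ∀ x ∈ Set.Ioo (0:ℝ) R,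
      -u'' x - (n - 1) * (Real.cosh x / Real.sinh x) * u' x
        = lam * u x + |u x| ^ (p - 1) * u x)
    (hu'0 : u' 0 = 0) (huR : u R = 0)
    (hnontriv : ∃ x ∈ Set.Icc (0:ℝ) R, u x ≠ 0) :
    False :=
  main_theorem_general n R lam hn2 hn4 hR p hp hlam u u' u'' hu hu' hode huR hnontriv
end
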